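/- arXiv:2103.06834 — 6 statements merged into one kernel-verified Lean document; each statement's English description precedes it below -/
import Mathlib

section
/- For all f, g ∈ L²(ℝ²), the double integral ∫_{ℝ²}∫_{ℝ²} |f(x)| |g(x')| / (|x|² + |x'|²) dx dx' is at most π² ‖f‖_{L²} ‖g‖_{L²}. -/
/-!
Schur test with the weight `w(x) = |x|⁻¹`. In polar coordinates
`∫_{ℝ²} dy / (|y| (r² + |y|²)) = 2π ∫₀^∞ ds / (r² + s²) = π² / r`, so both Schur integrals of the
kernel `(|x|² + |y|²)⁻¹` against `w` are bounded by `π² w`. The Schur test itself is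
Cauchy–Schwarz on `ℝ² × ℝ²` after the splitting
`K F(x) G(y) = √(K F(x)² w(y) / w(x)) · √(K G(y)² w(x) / w(y))`.
-/

open MeasureTheory Real Set Metric Filter Topology Function
open scoped ENNReal

theorem MeasureTheory.lintegral_fun_norm_addHaar {E : Type*} [NormedAddCommGroup E]
    [NormedSpace ℝ E] [Nontrivial E] [MeasurableSpace E] [BorelSpace E] [FiniteDimensional ℝ E]
    (μ : Measure E) [μ.IsAddHaarMeasure] {f : ℝ → ℝ≥0∞} (hf : Measurable f) :
    ∫⁻ x, f ‖x‖ ∂μ = Module.finrank ℝ E * μ (ball 0 1) *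
      ∫⁻ y in Ioi (0 : ℝ), ENNReal.ofReal (y ^ (Module.finrank ℝ E - 1)) * f y := by
  have hf' : Measurable fun y : Ioi (0 : ℝ) ↦ f y := hf.comp measurable_subtype_coe
  calc ∫⁻ x, f ‖x‖ ∂μ = ∫⁻ x : ({(0)}ᶜ : Set E), f ‖x.1‖ ∂(μ.comap (↑)) := by
        rw [lintegral_subtype_comap (measurableSet_singleton _).compl (fun x ↦ f ‖x‖),
          restrict_compl_singleton]
    _ = ∫⁻ x, f x.2 ∂μ.toSphere.prod (.volumeIoiPow (Module.finrank ℝ E - 1)) := by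
        simpa using (μ.measurePreserving_homeomorphUnitSphereProd.lintegral_comp
          (hf'.comp measurable_snd))
    _ = μ.toSphere univ * ∫⁻ y : Ioi (0 : ℝ), f y ∂.volumeIoiPow (Module.finrank ℝ E - 1) := by
        rw [lintegral_prod (fun x : sphere (0 : E) 1 × Ioi (0 : ℝ) ↦ f x.2)
          (hf'.comp measurable_snd).aemeasurable]
        simp only [lintegral_const, mul_comm]
    _ = _ := by
        rw [Measure.toSphere_apply_univ, Measure.volumeIoiPow,
          lintegral_withDensity_eq_lintegral_mul _ (by fun_prop) hf']
        simp only [Pi.mul_apply]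
        rw [lintegral_subtype_comap measurableSet_Ioi
            (fun y ↦ ENNReal.ofReal (y ^ (Module.finrank ℝ E - 1)) * f y)]

theorem lintegral_Ioi_inv_sq_add_sq {r : ℝ} (hr : 0 < r) :
    ∫⁻ s in Ioi (0 : ℝ), ENNReal.ofReal ((r ^ 2 + s ^ 2)⁻¹) = ENNReal.ofReal (π / (2 * r)) := by
  set F : ℝ → ℝ := fun s ↦ arctan (s / r) / r
  have hcont : ContinuousWithinAt F (Ici 0) 0 := by fun_prop
  have hderiv : ∀ s ∈ Ioi (0 : ℝ), HasDerivAt F (r ^ 2 + s ^ 2)⁻¹ s := fun s _ ↦ by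
    refine ((((hasDerivAt_id s).div_const r).arctan).div_const r).congr_deriv ?_
    simp only [id]
    field_simp
  have hpos : ∀ s ∈ Ioi (0 : ℝ), 0 ≤ (r ^ 2 + s ^ 2)⁻¹ := fun s _ ↦ by positivity
  have hlim : Tendsto F atTop (𝓝 (π / 2 / r)) :=
    ((tendsto_nhds_of_tendsto_nhdsWithin tendsto_arctan_atTop).comp
      (tendsto_id.atTop_div_const hr)).div_const r
  rw [← ofReal_integral_eq_lintegral_ofReal
      (integrableOn_Ioi_deriv_of_nonneg hcont hderiv hpos hlim)
      (ae_restrict_of_forall_mem measurableSet_Ioi hpos),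
    integral_Ioi_of_hasDerivAt_of_nonneg hcont hderiv hpos hlim]
  simp [F, div_div]

theorem lintegral_inv_sq_add_sq_norm_mul_inv_norm {r : ℝ} (hr : 0 < r) :
    ∫⁻ y : EuclideanSpace ℝ (Fin 2), ENNReal.ofReal ((r ^ 2 + ‖y‖ ^ 2)⁻¹) * ENNReal.ofReal ‖y‖⁻¹ =
      ENNReal.ofReal (π ^ 2) * ENNReal.ofReal r⁻¹ := by
  have hradial : ∀ s ∈ Ioi (0 : ℝ), ENNReal.ofReal (s ^ 1) *
      (ENNReal.ofReal ((r ^ 2 + s ^ 2)⁻¹) * ENNReal.ofReal s⁻¹) =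
        ENNReal.ofReal ((r ^ 2 + s ^ 2)⁻¹) := fun s (hs : 0 < s) ↦ by
    rw [mul_left_comm, ← ENNReal.ofReal_mul (by positivity), pow_one, mul_inv_cancel₀ hs.ne',
      ENNReal.ofReal_one, mul_one]
  rw [lintegral_fun_norm_addHaar volume
      (f := fun s ↦ ENNReal.ofReal ((r ^ 2 + s ^ 2)⁻¹) * ENNReal.ofReal s⁻¹) (by fun_prop),
    finrank_euclideanSpace_fin, EuclideanSpace.volume_ball_fin_two,
    setLIntegral_congr_fun measurableSet_Ioi hradial, lintegral_Ioi_inv_sq_add_sq hr]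
  simp only [ENNReal.ofReal_one, one_pow, one_mul, Nat.cast_ofNat]
  rw [← ENNReal.ofReal_ofNat, ← ENNReal.ofReal_mul (by norm_num),
    ← ENNReal.ofReal_mul (by positivity), ← ENNReal.ofReal_mul (by positivity)]
  congr 1
  field_simp

theorem eLpNorm_two_eq_lintegral_sq {α : Type*} [MeasurableSpace α] (μ : Measure α) (F : α → ℝ≥0∞) :
    eLpNorm F 2 μ = (∫⁻ x, F x ^ 2 ∂μ) ^ (2⁻¹ : ℝ) := by
  simp [eLpNorm_eq_lintegral_rpow_enorm_toReal two_ne_zero ENNReal.ofNat_ne_top]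

section Schur

variable {α β : Type*} [MeasurableSpace α] [MeasurableSpace β] {μ : Measure α} {ν : Measure β}
  [SFinite ν] {K : α → β → ℝ≥0∞} {p : α → ℝ≥0∞} {q : β → ℝ≥0∞}

theorem lintegral_prod_mul_sq_mul_div_le {F : α → ℝ≥0∞} {C : ℝ≥0∞}
    (hK : Measurable (uncurry K)) (hp : Measurable p) (hq : Measurable q) (hF : AEMeasurable F μ)
    (hp_pos : ∀ᵐ x ∂μ, p x ≠ 0 ∧ p x ≠ ∞) (hKq : ∀ᵐ x ∂μ, ∫⁻ y, K x y * q y ∂ν ≤ C * p x) :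
    ∫⁻ z, K z.1 z.2 * F z.1 ^ 2 * (q z.2 / p z.1) ∂μ.prod ν ≤ C * ∫⁻ x, F x ^ 2 ∂μ := by
  rw [lintegral_prod (fun z : α × β ↦ K z.1 z.2 * F z.1 ^ 2 * (q z.2 / p z.1))
      ((hK.aemeasurable.mul (hF.comp_fst.pow_const 2)).mul
        ((hq.comp measurable_snd).div (hp.comp measurable_fst)).aemeasurable),
    ← lintegral_const_mul'' C (hF.pow_const 2)]
  refine lintegral_mono_ae ?_
  filter_upwards [hp_pos, hKq] with x ⟨hp₀, hp_top⟩ hx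
  calc ∫⁻ y, K x y * F x ^ 2 * (q y / p x) ∂ν = F x ^ 2 / p x * ∫⁻ y, K x y * q y ∂ν := by
        have hKq_meas : Measurable fun y ↦ K x y * q y := (hK.comp measurable_prodMk_left).mul hq
        rw [← lintegral_const_mul _ hKq_meas]
        simp only [div_eq_mul_inv]
        congr 1 with y
        ring
    _ ≤ F x ^ 2 / p x * (C * p x) := by gcongr
    _ = C * F x ^ 2 := by
        rw [mul_left_comm, ENNReal.div_mul_cancel hp₀ hp_top]

theorem lintegral_lintegral_mul_le_of_schur [SFinite μ] {F : α → ℝ≥0∞} {G : β → ℝ≥0∞} {C₁ C₂ : ℝ≥0∞}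
    (hK : Measurable (uncurry K)) (hp : Measurable p) (hq : Measurable q)
    (hF : AEMeasurable F μ) (hG : AEMeasurable G ν)
    (hp_pos : ∀ᵐ x ∂μ, p x ≠ 0 ∧ p x ≠ ∞) (hq_pos : ∀ᵐ y ∂ν, q y ≠ 0 ∧ q y ≠ ∞)
    (hKq : ∀ᵐ x ∂μ, ∫⁻ y, K x y * q y ∂ν ≤ C₁ * p x)
    (hKp : ∀ᵐ y ∂ν, ∫⁻ x, K x y * p x ∂μ ≤ C₂ * q y) :
    ∫⁻ x, ∫⁻ y, K x y * F x * G y ∂ν ∂μ ≤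
      (C₁ * C₂) ^ (2⁻¹ : ℝ) * eLpNorm F 2 μ * eLpNorm G 2 ν := by
  set a : α × β → ℝ≥0∞ := fun z ↦ K z.1 z.2 * F z.1 ^ 2 * (q z.2 / p z.1)
  set b : α × β → ℝ≥0∞ := fun z ↦ K z.1 z.2 * G z.2 ^ 2 * (p z.1 / q z.2)
  have ha_meas : AEMeasurable a (μ.prod ν) := (hK.aemeasurable.mul (hF.comp_fst.pow_const 2)).mul
    ((hq.comp measurable_snd).div (hp.comp measurable_fst)).aemeasurable
  have hb_meas : AEMeasurable b (μ.prod ν) := (hK.aemeasurable.mul (hG.comp_snd.pow_const 2)).mul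
    ((hp.comp measurable_fst).div (hq.comp measurable_snd)).aemeasurable
  have ha : ∫⁻ z, a z ∂μ.prod ν ≤ C₁ * ∫⁻ x, F x ^ 2 ∂μ :=
    lintegral_prod_mul_sq_mul_div_le hK hp hq hF hp_pos hKq
  have hb : ∫⁻ z, b z ∂μ.prod ν ≤ C₂ * ∫⁻ y, G y ^ 2 ∂ν := by
    rw [← lintegral_prod_swap]
    exact lintegral_prod_mul_sq_mul_div_le (K := fun y x ↦ K x y)
      (hK.comp measurable_swap) hq hp hG hq_pos hKp
  have hab : ∀ᵐ z ∂μ.prod ν, K z.1 z.2 * F z.1 * G z.2 = a z ^ (2⁻¹ : ℝ) * b z ^ (2⁻¹ : ℝ) := by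
    filter_upwards [Measure.quasiMeasurePreserving_fst.ae hp_pos,
      Measure.quasiMeasurePreserving_snd.ae hq_pos]
      with z ⟨hp₀, hp_top⟩ ⟨hq₀, hq_top⟩
    have hw : q z.2 / p z.1 * (p z.1 / q z.2) = 1 := by
      rw [← mul_div_assoc, ENNReal.div_mul_cancel hp₀ hp_top, ENNReal.div_self hq₀ hq_top]
    rw [← ENNReal.mul_rpow_of_nonneg _ _ (by norm_num), show a z * b z =
      (K z.1 z.2 * F z.1 * G z.2) ^ 2 * (q z.2 / p z.1 * (p z.1 / q z.2)) by ring, hw, mul_one]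
    simpa using (ENNReal.pow_rpow_inv_natCast two_ne_zero _).symm
  calc ∫⁻ x, ∫⁻ y, K x y * F x * G y ∂ν ∂μ = ∫⁻ z, K z.1 z.2 * F z.1 * G z.2 ∂μ.prod ν :=
        (lintegral_prod _ (hK.aemeasurable.mul hF.comp_fst |>.mul hG.comp_snd)).symm
    _ = ∫⁻ z, a z ^ (2⁻¹ : ℝ) * b z ^ (2⁻¹ : ℝ) ∂μ.prod ν := lintegral_congr_ae hab
    _ ≤ (∫⁻ z, a z ∂μ.prod ν) ^ (2⁻¹ : ℝ) * (∫⁻ z, b z ∂μ.prod ν) ^ (2⁻¹ : ℝ) :=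
        ENNReal.lintegral_mul_norm_pow_le ha_meas hb_meas (by norm_num) (by norm_num) (by norm_num)
    _ ≤ (C₁ * ∫⁻ x, F x ^ 2 ∂μ) ^ (2⁻¹ : ℝ) * (C₂ * ∫⁻ y, G y ^ 2 ∂ν) ^ (2⁻¹ : ℝ) := by gcongr
    _ = (C₁ * C₂) ^ (2⁻¹ : ℝ) * eLpNorm F 2 μ * eLpNorm G 2 ν := by
        simp only [eLpNorm_two_eq_lintegral_sq,
          ENNReal.mul_rpow_of_nonneg _ _ (inv_nonneg.2 zero_le_two)]
        ring

end Schur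

/-- Lemma 4.6: for all `f, g ∈ L²(ℝ²)`,
`∫∫ |f(x)| |g(x')| / (|x|² + |x'|²) dx dx' ≤ π² ‖f‖_{L²} ‖g‖_{L²}`. -/
theorem stmt0 (f g : EuclideanSpace ℝ (Fin 2) → ℝ)
    (hf : MemLp f 2 volume) (hg : MemLp g 2 volume) :
    ∫⁻ x, ∫⁻ x', ENNReal.ofReal (|f x| * |g x'| / (‖x‖ ^ 2 + ‖x'‖ ^ 2)) ≤
      ENNReal.ofReal (π ^ 2) * eLpNorm f 2 volume * eLpNorm g 2 volume := by
  set K : EuclideanSpace ℝ (Fin 2) → EuclideanSpace ℝ (Fin 2) → ℝ≥0∞ :=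
    fun x y ↦ ENNReal.ofReal ((‖x‖ ^ 2 + ‖y‖ ^ 2)⁻¹)
  set w : EuclideanSpace ℝ (Fin 2) → ℝ≥0∞ := fun x ↦ ENNReal.ofReal ‖x‖⁻¹
  have hw_pos : ∀ᵐ x, w x ≠ 0 ∧ w x ≠ ∞ := by
    filter_upwards [Measure.ae_ne volume 0] with x hx
    exact ⟨(ENNReal.ofReal_pos.2 (by positivity)).ne', ENNReal.ofReal_ne_top⟩
  have hKw : ∀ᵐ x, ∫⁻ y, K x y * w y ≤ ENNReal.ofReal (π ^ 2) * w x := by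
    filter_upwards [Measure.ae_ne volume 0] with x hx
    exact (lintegral_inv_sq_add_sq_norm_mul_inv_norm (norm_pos_iff.2 hx)).le
  have hKw' : ∀ᵐ y, ∫⁻ x, K x y * w x ≤ ENNReal.ofReal (π ^ 2) * w y := by
    simpa only [K, add_comm] using hKw
  have hintegrand : ∀ x x', ENNReal.ofReal (|f x| * |g x'| / (‖x‖ ^ 2 + ‖x'‖ ^ 2)) =
      K x x' * ‖f x‖ₑ * ‖g x'‖ₑ := fun x x' ↦ by
    rw [Real.enorm_eq_ofReal_abs, Real.enorm_eq_ofReal_abs, ← ENNReal.ofReal_mul (by positivity),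
      ← ENNReal.ofReal_mul (by positivity), div_eq_mul_inv, mul_comm, mul_assoc]
  have hC (c : ℝ≥0∞) : (c * c) ^ (2⁻¹ : ℝ) = c := by
    simpa [sq] using ENNReal.pow_rpow_inv_natCast two_ne_zero c
  simp_rw [hintegrand]
  rw [← hC (ENNReal.ofReal (π ^ 2)), ← eLpNorm_enorm f, ← eLpNorm_enorm g]
  exact lintegral_lintegral_mul_le_of_schur (by fun_prop) (by fun_prop) (by fun_prop)
    hf.1.enorm hg.1.enorm hw_pos hw_pos hKw hKw'
end

section
/- For every x' ∈ ℝ² with x' ≠ 0, the integral ∫_{ℝ²} 1/((|x|² + |x'|²)·|x|) dx equals π²/|x'|. -/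
/-! In polar coordinates the factor `‖x‖` cancels the Jacobian `r`, leaving
`2π ∫₀^∞ dr / (r² + ‖x'‖²) = 2π · π / (2‖x'‖)`. -/

open MeasureTheory Real Set

theorem integral_Ioi_inv_sq_add_sq {a : ℝ} (ha : 0 < a) :
    ∫ y in Ioi (0 : ℝ), (y ^ 2 + a ^ 2)⁻¹ = π / (2 * a) := by
  have hrescale : ∀ y : ℝ, (y ^ 2 + a ^ 2)⁻¹ = a⁻¹ ^ 2 * (1 + (a⁻¹ * y) ^ 2)⁻¹ := fun y => by
    field_simp
    ring
  have hsubst := integral_comp_mul_left_Ioi (fun y => (1 + y ^ 2)⁻¹) 0 (inv_pos.mpr ha)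
  rw [mul_zero] at hsubst
  simp_rw [hrescale]
  rw [integral_const_mul, hsubst, integral_Ioi_inv_one_add_sq, arctan_zero, inv_inv,
    smul_eq_mul]
  field_simp
  ring

theorem EuclideanSpace.integral_fun_norm_fin_two {F : Type*} [NormedAddCommGroup F]
    [NormedSpace ℝ F] (f : ℝ → F) :
    ∫ x : EuclideanSpace ℝ (Fin 2), f ‖x‖ = (2 * π) • ∫ y in Ioi (0 : ℝ), y • f y := by
  rw [integral_fun_norm_addHaar, finrank_euclideanSpace_fin, measureReal_def,
    EuclideanSpace.volume_ball_fin_two, ENNReal.toReal_mul, ENNReal.toReal_pow,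
    ENNReal.toReal_ofReal zero_le_one, ENNReal.toReal_ofReal pi_pos.le, one_pow, one_mul,
    ← Nat.cast_smul_eq_nsmul ℝ, smul_smul]
  norm_num

/-- The Schur-test computation inside the proof of Lemma 4.6: for every `x' ≠ 0` in `ℝ²`,
`∫_{ℝ²} 1 / ((|x|² + |x'|²)·|x|) dx = π² / |x'|`. -/
theorem stmt1 (x' : EuclideanSpace ℝ (Fin 2)) (hx' : x' ≠ 0) :
    ∫ x : EuclideanSpace ℝ (Fin 2), 1 / ((‖x‖ ^ 2 + ‖x'‖ ^ 2) * ‖x‖) = π ^ 2 / ‖x'‖ := by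
  have ha : 0 < ‖x'‖ := norm_pos_iff.mpr hx'
  have hradial : ∀ y ∈ Ioi (0 : ℝ),
      y • (1 / ((y ^ 2 + ‖x'‖ ^ 2) * y)) = (y ^ 2 + ‖x'‖ ^ 2)⁻¹ := fun y (hy : 0 < y) => by
    rw [smul_eq_mul]
    field_simp
  rw [EuclideanSpace.integral_fun_norm_fin_two (fun y => 1 / ((y ^ 2 + ‖x'‖ ^ 2) * y)),
    setIntegral_congr_fun measurableSet_Ioi hradial, integral_Ioi_inv_sq_add_sq ha, smul_eq_mul]
  field_simp
end

section
/- Let V ∈ L¹(ℝ²) ∩ L²(ℝ²) and suppose ∫_{ℝ²} |r|^{2s} |V(r)| dr < ∞ for some s > 0. Then ∫_{ℝ²}∫_{ℝ²} |V(r)| (ln |r − r'|)² |V(r')| dr dr' < ∞. -/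
/-!
Split `log² ‖r - r'‖` at `‖r - r'‖ = 1`. On the unit ball, `log² ‖x‖ ≤ 16 ‖x‖^(-1/2)` is
integrable in the plane; with `2 |V r| |V r'| ≤ V r ² + V r' ²` that part becomes a convolution
integrand of `V² ∈ L¹` with an `L¹` kernel. Off the unit ball, with `t = min s (1/2)`,
`log² ‖r - r'‖ ≤ ‖r - r'‖^(2t) / t² ≤ (‖r‖^(2t) + ‖r'‖^(2t)) / t²` by subadditivity of
`x ↦ x^(2t)`, and `‖r‖^(2t) ≤ 1 + ‖r‖^(2s)` is controlled by the moment hypothesis.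
-/

open MeasureTheory Real ENNReal Set Metric

theorem Real.log_sq_le_mul_rpow_neg_half {y : ℝ} (hy : 0 ≤ y) (hy1 : y ≤ 1) :
    log y ^ 2 ≤ 16 * y ^ (-(1 / 2) : ℝ) := by
  rcases hy.eq_or_lt with rfl | hy0
  · simp
  have hlog : |log y * y ^ (1 / 4 : ℝ)| < 4 := by
    simpa using abs_log_mul_self_rpow_lt y (1 / 4) hy0 hy1 (by norm_num)
  have hsq : (log y * y ^ (1 / 4 : ℝ)) ^ 2 = log y ^ 2 * y ^ (1 / 2 : ℝ) := by
    rw [mul_pow, ← rpow_natCast (y ^ _), ← rpow_mul hy]; norm_num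
  rw [rpow_neg hy, ← div_eq_mul_inv, le_div_iff₀ (rpow_pos_of_pos hy0 _), ← hsq]
  nlinarith [sq_abs (log y * y ^ (1 / 4 : ℝ)), abs_nonneg (log y * y ^ (1 / 4 : ℝ))]

theorem Real.log_sq_le_rpow_div_sq {y t : ℝ} (hy : 1 ≤ y) (ht : 0 < t) :
    log y ^ 2 ≤ y ^ (2 * t) / t ^ 2 := by
  have hy0 : 0 ≤ y := zero_le_one.trans hy
  calc log y ^ 2 ≤ (y ^ t / t) ^ 2 :=
        pow_le_pow_left₀ (log_nonneg hy) (log_le_rpow_div hy0 ht) 2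
    _ = y ^ (2 * t) / t ^ 2 := by
        rw [div_pow, ← rpow_natCast (y ^ t), ← rpow_mul hy0, mul_comm]; norm_num

theorem Real.rpow_le_one_add_rpow {a p q : ℝ} (ha : 0 ≤ a) (hp : 0 ≤ p) (hpq : p ≤ q) :
    a ^ p ≤ 1 + a ^ q := by
  rcases le_total a 1 with h | h
  · linarith [rpow_le_one ha h hp, rpow_nonneg ha q]
  · linarith [rpow_le_rpow_of_exponent_le h hpq]

theorem integrableOn_ball_log_norm_sq {E : Type*} [NormedAddCommGroup E] [NormedSpace ℝ E]
    [FiniteDimensional ℝ E] [MeasurableSpace E] [BorelSpace E] {μ : Measure E}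
    [μ.IsAddHaarMeasure] (hd : 1 ≤ Module.finrank ℝ E) :
    IntegrableOn (fun x : E => log ‖x‖ ^ 2) (ball 0 1) μ := by
  refine integrableOn_ball_of_norm_le_rpow hd (C := 16) (α := 1 / 2)
    (by linarith [(Nat.one_le_cast (α := ℝ)).mpr hd]) ?_
    (measurable_norm.log.pow_const 2).aestronglyMeasurable
  filter_upwards [self_mem_ae_restrict measurableSet_ball] with x hx
  rw [Real.norm_of_nonneg (sq_nonneg _)]
  exact log_sq_le_mul_rpow_neg_half (norm_nonneg x) (mem_ball_zero_iff.mp hx).le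

theorem log_sq_norm_sub_le_indicator_add {E : Type*} [SeminormedAddCommGroup E] {s : ℝ}
    (hs : 0 < s) : ∃ c, ∀ x y : E, log ‖x - y‖ ^ 2 ≤
      (ball 0 1).indicator (fun z : E => log ‖z‖ ^ 2) (x - y) +
        c * ((1 + ‖x‖ ^ (2 * s)) + (1 + ‖y‖ ^ (2 * s))) := by
  set t := min s (1 / 2)
  have ht : 0 < t := lt_min hs one_half_pos
  have h2t : 0 ≤ 2 * t := by positivity
  have h2t_le_one : 2 * t ≤ 1 := by linarith [min_le_right s (1 / 2)]
  have h2t_le : 2 * t ≤ 2 * s := by linarith [min_le_left s (1 / 2)]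
  refine ⟨(t ^ 2)⁻¹, fun x y => ?_⟩
  by_cases hxy : x - y ∈ ball 0 1
  · rw [indicator_of_mem hxy, le_add_iff_nonneg_right]
    positivity
  rw [indicator_of_notMem hxy, zero_add, ← div_eq_inv_mul]
  rw [mem_ball_zero_iff, not_lt] at hxy
  refine (log_sq_le_rpow_div_sq hxy ht).trans (div_le_div_of_nonneg_right ?_ (by positivity))
  calc ‖x - y‖ ^ (2 * t) ≤ (‖x‖ + ‖y‖) ^ (2 * t) :=
        rpow_le_rpow (norm_nonneg _) (norm_sub_le x y) h2t
    _ ≤ ‖x‖ ^ (2 * t) + ‖y‖ ^ (2 * t) :=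
        rpow_add_le_add_rpow (norm_nonneg _) (norm_nonneg _) h2t h2t_le_one
    _ ≤ _ := add_le_add (rpow_le_one_add_rpow (norm_nonneg _) h2t h2t_le)
        (rpow_le_one_add_rpow (norm_nonneg _) h2t h2t_le)

section ConvolutionKernel

variable {G : Type*} [MeasurableSpace G] [AddGroup G] [MeasurableAdd₂ G] [MeasurableNeg G]
  {μ : Measure G} [SFinite μ] [μ.IsAddRightInvariant] [μ.IsNegInvariant]

theorem integrable_prod_mul_sub_mul_of_memLp_two {f K : G → ℝ} (hf : MemLp f 2 μ)
    (hK : Integrable K μ) :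
    Integrable (fun p : G × G => f p.1 * K (p.1 - p.2) * f p.2) (μ.prod μ) := by
  have hK_meas : AEStronglyMeasurable (fun p : G × G => K (p.1 - p.2)) (μ.prod μ) :=
    hK.1.comp_quasiMeasurePreserving (quasiMeasurePreserving_sub_of_right_invariant μ μ)
  have hsnd : Integrable (fun p : G × G => f p.2 ^ 2 * |K (p.1 - p.2)|) (μ.prod μ) :=
    hf.integrable_sq.convolution_integrand (ContinuousLinearMap.mul ℝ ℝ) hK.abs
  have hfst : Integrable (fun p : G × G => f p.1 ^ 2 * |K (p.1 - p.2)|) (μ.prod μ) := by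
    simpa only [ContinuousLinearMap.mul_apply', Function.comp_def, Prod.fst_swap,
      Prod.snd_swap, neg_sub] using (hf.integrable_sq.convolution_integrand
        (ContinuousLinearMap.mul ℝ ℝ) hK.abs.comp_neg).swap
  refine (hfst.add hsnd).mono' ((hf.1.comp_fst.fun_mul hK_meas).fun_mul hf.1.comp_snd)
    (ae_of_all _ fun p => ?_)
  simp only [Pi.add_apply, norm_mul, Real.norm_eq_abs]
  nlinarith [abs_nonneg (K (p.1 - p.2)), sq_abs (f p.1), sq_abs (f p.2),
    mul_nonneg (abs_nonneg (K (p.1 - p.2))) (sq_nonneg (|f p.1| - |f p.2|))]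

end ConvolutionKernel

local notation "ℝ²" => EuclideanSpace ℝ (Fin 2)

/-- From the proof of Lemma 4.1 (the operator `L` is Hilbert–Schmidt): if
`V ∈ L¹(ℝ²) ∩ L²(ℝ²)` and `∫ |r|^{2s}|V(r)| dr < ∞` for some `s > 0`, then
`∫∫ |V(r)| (ln|r−r'|)² |V(r')| dr dr' < ∞`. -/
theorem stmt6 (V : EuclideanSpace ℝ (Fin 2) → ℝ)
    (hV1 : Integrable V) (hV2 : MemLp V 2 volume)
    (s : ℝ) (hs : 0 < s)
    (hVs : Integrable (fun r : EuclideanSpace ℝ (Fin 2) => ‖r‖ ^ (2 * s) * |V r|)) :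
    (∫⁻ r : EuclideanSpace ℝ (Fin 2), ∫⁻ r' : EuclideanSpace ℝ (Fin 2),
        ENNReal.ofReal (|V r| * Real.log ‖r - r'‖ ^ 2 * |V r'|)) < ∞ := by
  obtain ⟨c, hlog⟩ := log_sq_norm_sub_le_indicator_add (E := ℝ²) hs
  set K := (ball (0 : ℝ²) 1).indicator fun z => log ‖z‖ ^ 2
  set w := fun r : ℝ² => 1 + ‖r‖ ^ (2 * s)
  have hK : Integrable K :=
    (integrableOn_ball_log_norm_sq (by simp)).integrable_indicator measurableSet_ball
  have hwV : Integrable fun r => w r * |V r| := by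
    simpa only [w, add_mul, one_mul] using hV1.abs.fun_add hVs
  have hdom : Integrable (fun p : ℝ² × ℝ² =>
      |V p.1| * K (p.1 - p.2) * |V p.2| +
        c * (w p.1 * |V p.1| * |V p.2| + |V p.1| * (w p.2 * |V p.2|))) (volume.prod volume) :=
    (integrable_prod_mul_sub_mul_of_memLp_two hV2.abs hK).add
      (((hwV.mul_prod hV1.abs).add (hV1.abs.mul_prod hwV)).const_mul c)
  have hF : Integrable (fun p : ℝ² × ℝ² =>
      |V p.1| * log ‖p.1 - p.2‖ ^ 2 * |V p.2|) (volume.prod volume) := by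
    refine hdom.mono' ?_ (ae_of_all _ fun p => ?_)
    · exact (hV1.abs.1.comp_fst.fun_mul
        ((measurable_fst.sub measurable_snd).norm.log.pow_const 2).aestronglyMeasurable).fun_mul
          hV1.abs.1.comp_snd
    · have hmul := mul_le_mul_of_nonneg_left (hlog p.1 p.2)
        (mul_nonneg (abs_nonneg (V p.1)) (abs_nonneg (V p.2)))
      rw [Real.norm_of_nonneg (by positivity)]
      linear_combination hmul
  rw [← lintegral_prod _ hF.1.aemeasurable.ennreal_ofReal]
  exact hF.lintegral_lt_top
end

section
/- Let d₁, d₂ ≥ 1 be integers, d = d₁ + d₂, and z ∈ ℂ with Re(z) > 0. For every x₁ ∈ ℝ^{d₁} with x₁ ≠ 0 (or with d₁ = 1 and x₁ arbitrary), the function x₂ ↦ G_z^d(x₁, x₂) is integrable on ℝ^{d₂} and ∫_{ℝ^{d₂}} G_z^d(x₁, x₂) dx₂ = G_z^{d₁}(x₁). -/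
/-! The heat kernel `p_t(x) = (4πt)^{-d/2} e^{-|x|²/4t}` factorises as
`p_t(x₁, x₂) = p_t(x₁) p_t(x₂)` and `p_t` is a probability density on `ℝ^{d₂}`. Hence, after
swapping the `x₂`- and `t`-integrals (Fubini), `∫ G_z^{d₁+d₂}(x₁, x₂) dx₂` collapses to
`∫ p_t(x₁) e^{-zt} dt = G_z^{d₁}(x₁)`. Fubini applies because `t ↦ p_t(x₁) e^{-Re z t}` is
integrable: for `t ≥ 1` it is dominated by `e^{-Re z t}`, and near `t = 0` either
`e^{-|x₁|²/4t}` beats every power of `t` (when `x₁ ≠ 0`) or `p_t(x₁) ≤ (4πt)^{-1/2}`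
(when `d₁ = 1`). -/

open MeasureTheory Real

/-- The Green's function `G_z^d` of `−Δ + z` on `ℝ^d`, defined via the heat kernel. -/
noncomputable def GreenFnC (d : ℕ) (z : ℂ) (x : EuclideanSpace ℝ (Fin d)) : ℂ :=
  ∫ t in Set.Ioi (0 : ℝ),
    (((4 * π * t) ^ (-(d : ℝ) / 2) : ℝ) : ℂ) *
      Complex.exp (-((‖x‖ ^ 2 / (4 * t) : ℝ) : ℂ) - z * (t : ℂ))

/-- Concatenation `ℝ^{d₁} × ℝ^{d₂} → ℝ^{d₁+d₂}`, writing `x = (x₁, x₂)`. -/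
noncomputable def app2 {d₁ d₂ : ℕ} (x₁ : EuclideanSpace ℝ (Fin d₁))
    (x₂ : EuclideanSpace ℝ (Fin d₂)) : EuclideanSpace ℝ (Fin (d₁ + d₂)) :=
  (EuclideanSpace.equiv (Fin (d₁ + d₂)) ℝ).symm
    (Fin.append (fun i => x₁ i) (fun i => x₂ i))

open Set

theorem norm_app2_sq {d₁ d₂ : ℕ} (x₁ : EuclideanSpace ℝ (Fin d₁))
    (x₂ : EuclideanSpace ℝ (Fin d₂)) : ‖app2 x₁ x₂‖ ^ 2 = ‖x₁‖ ^ 2 + ‖x₂‖ ^ 2 := by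
  simp only [EuclideanSpace.norm_sq_eq, Fin.sum_univ_add]
  simp [app2]

theorem exp_neg_div_le_factorial_mul_pow {a y : ℝ} (ha : 0 < a) (hy : 0 < y) (n : ℕ) :
    rexp (-(a / y)) ≤ n.factorial * (y / a) ^ n := by
  have hpos : 0 < (a / y) ^ n / n.factorial := by positivity
  calc rexp (-(a / y)) = (rexp (a / y))⁻¹ := exp_neg _
    _ ≤ ((a / y) ^ n / n.factorial)⁻¹ :=
        inv_anti₀ hpos (pow_div_factorial_le_exp _ (by positivity) n)
    _ = n.factorial * (y / a) ^ n := by rw [inv_div, div_eq_mul_inv, ← inv_pow, inv_div]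

section Mixture

variable {α β E : Type*} [MeasurableSpace α] [MeasurableSpace β]
  [NormedAddCommGroup E] [NormedSpace ℝ E] {μ : Measure α} {ν : Measure β} [SFinite ν]
  {k : α → E} {ρ : α → β → ℝ}

theorem integrable_prod_smul_of_integral_eq_one (hk : Integrable k μ)
    (hρ : AEStronglyMeasurable (Function.uncurry ρ) (μ.prod ν))
    (hρ₀ : ∀ᵐ t ∂μ, 0 ≤ᵐ[ν] ρ t) (hρi : ∀ᵐ t ∂μ, Integrable (ρ t) ν)
    (hρ₁ : ∀ᵐ t ∂μ, ∫ y, ρ t y ∂ν = 1) :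
    Integrable (Function.uncurry fun t y => ρ t y • k t) (μ.prod ν) := by
  refine (integrable_prod_iff (f := Function.uncurry fun t y => ρ t y • k t)
    (hρ.smul hk.aestronglyMeasurable.comp_fst)).2 ⟨?_, ?_⟩
  · filter_upwards [hρi] with t ht using ht.smul_const (k t)
  · refine hk.norm.congr ?_
    filter_upwards [hρ₀, hρ₁] with t ht₀ ht₁
    calc ‖k t‖ = (∫ y, ρ t y ∂ν) * ‖k t‖ := by rw [ht₁, one_mul]
      _ = ∫ y, ‖ρ t y • k t‖ ∂ν := by
        rw [← integral_mul_const]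
        refine integral_congr_ae ?_
        filter_upwards [ht₀] with y hy
        rw [norm_smul, norm_of_nonneg hy]

theorem integral_integral_smul_of_integral_eq_one [SFinite μ] [CompleteSpace E]
    (hint : Integrable (Function.uncurry fun t y => ρ t y • k t) (μ.prod ν))
    (hρ₁ : ∀ᵐ t ∂μ, ∫ y, ρ t y ∂ν = 1) :
    ∫ y, ∫ t, ρ t y • k t ∂μ ∂ν = ∫ t, k t ∂μ := by
  rw [← integral_integral_swap hint]
  refine integral_congr_ae ?_
  filter_upwards [hρ₁] with t ht
  rw [integral_smul_const, ht, one_smul]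

end Mixture

noncomputable def heatKernel (d : ℕ) (t : ℝ) (x : EuclideanSpace ℝ (Fin d)) : ℝ :=
  (4 * π * t) ^ (-(d : ℝ) / 2) * rexp (-(‖x‖ ^ 2 / (4 * t)))

namespace heatKernel

variable {d : ℕ} {t : ℝ}

theorem measurable_uncurry : Measurable (Function.uncurry (heatKernel d)) := by
  unfold heatKernel; fun_prop

theorem nonneg (ht : 0 ≤ t) (x : EuclideanSpace ℝ (Fin d)) : 0 ≤ heatKernel d t x := by
  unfold heatKernel; positivity

theorem le_rpow (ht : 0 ≤ t) (x : EuclideanSpace ℝ (Fin d)) :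
    heatKernel d t x ≤ (4 * π * t) ^ (-(d : ℝ) / 2) := by
  refine mul_le_of_le_one_right (by positivity) (exp_le_one_iff.2 ?_)
  have : 0 ≤ ‖x‖ ^ 2 / (4 * t) := by positivity
  linarith

theorem le_one (ht : 1 ≤ 4 * π * t) (x : EuclideanSpace ℝ (Fin d)) : heatKernel d t x ≤ 1 :=
  (le_rpow (by nlinarith [pi_pos]) x).trans <|
    rpow_le_one_of_one_le_of_nonpos ht (by rw [neg_div]; exact neg_nonpos.2 (by positivity))

theorem le_of_ne_zero {x : EuclideanSpace ℝ (Fin d)} (hx : x ≠ 0) (ht₀ : 0 < t) (ht₁ : t ≤ 1) :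
    heatKernel d t x ≤ (4 * π) ^ (-(d : ℝ) / 2) * (d.factorial * (4 / ‖x‖ ^ 2) ^ d) := by
  have ha : 0 < ‖x‖ ^ 2 := by positivity
  calc heatKernel d t x
      ≤ (4 * π) ^ (-(d : ℝ) / 2) * t ^ (-(d : ℝ) / 2) *
          (d.factorial * (4 * t / ‖x‖ ^ 2) ^ d) := by
        rw [heatKernel, mul_rpow (by positivity) ht₀.le]
        gcongr
        exact exp_neg_div_le_factorial_mul_pow ha (by positivity) d
    _ = (4 * π) ^ (-(d : ℝ) / 2) * (d.factorial * (4 / ‖x‖ ^ 2) ^ d) *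
          (t ^ (-(d : ℝ) / 2) * t ^ d) := by
        rw [mul_div_right_comm, mul_pow]; ring
    _ ≤ (4 * π) ^ (-(d : ℝ) / 2) * (d.factorial * (4 / ‖x‖ ^ 2) ^ d) * 1 := by
        gcongr
        rw [← rpow_natCast, ← rpow_add ht₀]
        exact rpow_le_one ht₀.le ht₁ (by linarith [(Nat.cast_nonneg d : (0 : ℝ) ≤ d)])
    _ = _ := mul_one _

theorem integrableOn_Ioc (x : EuclideanSpace ℝ (Fin d)) (h : x ≠ 0 ∨ d ≤ 1) :
    IntegrableOn (fun t => heatKernel d t x) (Ioc 0 1) := by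
  have hmeas : AEStronglyMeasurable (fun t => heatKernel d t x) (volume.restrict (Ioc 0 1)) :=
    measurable_uncurry.of_uncurry_right.aestronglyMeasurable
  rcases h with hx | hd
  · refine IntegrableOn.of_bound measure_Ioc_lt_top hmeas
      ((4 * π) ^ (-(d : ℝ) / 2) * (d.factorial * (4 / ‖x‖ ^ 2) ^ d)) ?_
    filter_upwards [ae_restrict_mem measurableSet_Ioc] with t ⟨ht₀, ht₁⟩
    rw [norm_of_nonneg (nonneg ht₀.le x)]
    exact le_of_ne_zero hx ht₀ ht₁
  · have hrpow : IntegrableOn (fun t : ℝ => (4 * π * t) ^ (-(d : ℝ) / 2)) (Ioc 0 1) := by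
      have hd' : (d : ℝ) ≤ 1 := by exact_mod_cast hd
      have ht : IntegrableOn (fun t : ℝ => t ^ (-(d : ℝ) / 2)) (Ioc 0 1) := by
        rw [← intervalIntegrable_iff_integrableOn_Ioc_of_le zero_le_one]
        exact intervalIntegral.intervalIntegrable_rpow' (by linarith)
      refine IntegrableOn.congr_fun (ht.const_mul ((4 * π) ^ (-(d : ℝ) / 2)))
        (fun t ht => (mul_rpow (by positivity) ht.1.le).symm) measurableSet_Ioc
    refine hrpow.mono' hmeas ?_
    filter_upwards [ae_restrict_mem measurableSet_Ioc] with t ⟨ht₀, _⟩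
    rw [norm_of_nonneg (nonneg ht₀.le x)]
    exact le_rpow ht₀.le x

theorem integrableOn_mul_exp_neg (x : EuclideanSpace ℝ (Fin d)) (h : x ≠ 0 ∨ d ≤ 1) {c : ℝ}
    (hc : 0 < c) : IntegrableOn (fun t => heatKernel d t x * rexp (-(c * t))) (Ioi 0) := by
  have hmeas : Measurable (fun t => heatKernel d t x * rexp (-(c * t))) := by
    unfold heatKernel; fun_prop
  rw [← Ioc_union_Ioi_eq_Ioi zero_le_one]
  refine IntegrableOn.union ((integrableOn_Ioc x h).mono' hmeas.aestronglyMeasurable ?_)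
    ((exp_neg_integrableOn_Ioi 1 hc).mono' hmeas.aestronglyMeasurable ?_)
  · filter_upwards [ae_restrict_mem measurableSet_Ioc] with t ⟨ht₀, _⟩
    rw [norm_of_nonneg (by have := nonneg ht₀.le x; positivity)]
    exact mul_le_of_le_one_right (nonneg ht₀.le x) (exp_le_one_iff.2 (by nlinarith))
  · filter_upwards [ae_restrict_mem measurableSet_Ioi] with t (ht : 1 < t)
    rw [norm_of_nonneg (by have := nonneg (by linarith) x; positivity), ← neg_mul]
    exact mul_le_of_le_one_left (exp_pos _).le (le_one (by nlinarith [pi_gt_three]) x)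

theorem integral_eq_one (ht : 0 < t) : ∫ x : EuclideanSpace ℝ (Fin d), heatKernel d t x = 1 := by
  have hb : 0 < 1 / (4 * t) := by positivity
  have hgauss := GaussianFourier.integral_rexp_neg_mul_sq_norm
    (V := EuclideanSpace ℝ (Fin d)) hb
  rw [finrank_euclideanSpace_fin, show π / (1 / (4 * t)) = 4 * π * t by field_simp] at hgauss
  simp_rw [heatKernel, integral_const_mul, neg_div, div_eq_mul_one_div (‖_‖ ^ 2),
    mul_comm (‖_‖ ^ 2), ← neg_mul, hgauss, ← rpow_add (by positivity : (0 : ℝ) < 4 * π * t)]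
  simp

theorem integrable (ht : 0 < t) : Integrable (heatKernel d t) :=
  .of_integral_ne_zero (by rw [integral_eq_one ht]; exact one_ne_zero)

theorem app2_eq_mul {d₁ d₂ : ℕ} (ht : 0 < t) (x₁ : EuclideanSpace ℝ (Fin d₁))
    (x₂ : EuclideanSpace ℝ (Fin d₂)) :
    heatKernel (d₁ + d₂) t (app2 x₁ x₂) = heatKernel d₁ t x₁ * heatKernel d₂ t x₂ := by
  have h4πt : 0 < 4 * π * t := by positivity
  rw [heatKernel, heatKernel, heatKernel, norm_app2_sq, add_div, neg_add, exp_add, Nat.cast_add,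
    neg_add, add_div, rpow_add h4πt]
  ring

end heatKernel

theorem greenFnC_eq_integral_heatKernel (d : ℕ) (z : ℂ) (x : EuclideanSpace ℝ (Fin d)) :
    GreenFnC d z x = ∫ t in Ioi 0, heatKernel d t x • Complex.exp (-(z * t)) := by
  refine integral_congr_ae (ae_of_all _ fun t => ?_)
  simp only [heatKernel, Complex.real_smul, Complex.ofReal_mul, Complex.ofReal_exp,
    Complex.ofReal_neg, sub_eq_add_neg, Complex.exp_add, mul_assoc]

theorem integrableOn_heatKernel_smul_cexp_neg {d : ℕ} (x : EuclideanSpace ℝ (Fin d))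
    (h : x ≠ 0 ∨ d ≤ 1) {z : ℂ} (hz : 0 < z.re) :
    IntegrableOn (fun t => heatKernel d t x • Complex.exp (-(z * t))) (Ioi 0) := by
  refine (heatKernel.integrableOn_mul_exp_neg x h hz).mono'
    (heatKernel.measurable_uncurry.of_uncurry_right.smul (by fun_prop)).aestronglyMeasurable ?_
  filter_upwards [ae_restrict_mem measurableSet_Ioi] with t (ht : 0 < t)
  rw [norm_smul, Complex.norm_exp, norm_of_nonneg (heatKernel.nonneg ht.le x)]
  simp

theorem stmt11_general (d₁ d₂ : ℕ) (z : ℂ) (hz : 0 < z.re)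
    (x₁ : EuclideanSpace ℝ (Fin d₁)) (hx₁ : x₁ ≠ 0 ∨ d₁ = 1) :
    Integrable
      (fun x₂ : EuclideanSpace ℝ (Fin d₂) => GreenFnC (d₁ + d₂) z (app2 x₁ x₂)) volume ∧
    (∫ x₂ : EuclideanSpace ℝ (Fin d₂), GreenFnC (d₁ + d₂) z (app2 x₁ x₂)) =
      GreenFnC d₁ z x₁ := by
  set k : ℝ → ℂ := fun t => heatKernel d₁ t x₁ • Complex.exp (-(z * t))
  have hG : ∀ x₂ : EuclideanSpace ℝ (Fin d₂),
      GreenFnC (d₁ + d₂) z (app2 x₁ x₂) = ∫ t in Ioi 0, heatKernel d₂ t x₂ • k t := by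
    intro x₂
    rw [greenFnC_eq_integral_heatKernel]
    refine setIntegral_congr_fun measurableSet_Ioi fun t ht => ?_
    rw [heatKernel.app2_eq_mul ht, mul_comm, mul_smul]
  have hk : IntegrableOn k (Ioi 0) :=
    integrableOn_heatKernel_smul_cexp_neg x₁ (hx₁.imp_right le_of_eq) hz
  have hρ₀ : ∀ᵐ t ∂volume.restrict (Ioi 0), 0 ≤ᵐ[volume] heatKernel d₂ t := by
    filter_upwards [ae_restrict_mem measurableSet_Ioi] with t (ht : 0 < t)
    exact ae_of_all _ (heatKernel.nonneg ht.le)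
  have hρi : ∀ᵐ t ∂volume.restrict (Ioi 0), Integrable (heatKernel d₂ t) := by
    filter_upwards [ae_restrict_mem measurableSet_Ioi] with t ht using heatKernel.integrable ht
  have hρ₁ : ∀ᵐ t ∂volume.restrict (Ioi 0), ∫ x₂, heatKernel d₂ t x₂ = 1 := by
    filter_upwards [ae_restrict_mem measurableSet_Ioi] with t ht using heatKernel.integral_eq_one ht
  have hint := integrable_prod_smul_of_integral_eq_one hk
    heatKernel.measurable_uncurry.aestronglyMeasurable hρ₀ hρi hρ₁
  simp_rw [hG]
  exact ⟨hint.integral_prod_right, (integral_integral_smul_of_integral_eq_one hint hρ₁).trans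
    (greenFnC_eq_integral_heatKernel d₁ z x₁).symm⟩

/-- Lemma A.1 (vi): for `x₁ ≠ 0` (or `d₁ = 1`), the function `x₂ ↦ G_z^{d₁+d₂}(x₁,x₂)`
is integrable on `ℝ^{d₂}` and `∫ G_z^{d₁+d₂}(x₁,x₂) dx₂ = G_z^{d₁}(x₁)`. -/
theorem stmt11 (d₁ d₂ : ℕ) (h₁ : 1 ≤ d₁) (h₂ : 1 ≤ d₂) (z : ℂ) (hz : 0 < z.re)
    (x₁ : EuclideanSpace ℝ (Fin d₁)) (hx₁ : x₁ ≠ 0 ∨ d₁ = 1) :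
    Integrable
      (fun x₂ : EuclideanSpace ℝ (Fin d₂) => GreenFnC (d₁ + d₂) z (app2 x₁ x₂)) volume ∧
    (∫ x₂ : EuclideanSpace ℝ (Fin d₂), GreenFnC (d₁ + d₂) z (app2 x₁ x₂)) =
      GreenFnC d₁ z x₁ :=
  stmt11_general d₁ d₂ z hz x₁ hx₁
end

section
/- Let z ∈ ℂ with Re(z) > 0, let c > 0, k ∈ ℝ, l ≥ 0, and let 0 < z' < √(Re(z)). Then sup over x ∈ ℝ^d with |x| ≥ c of the integral ∫_0^∞ t^k |x|^l exp(−|x|²/(4t) − Re(z)·t + z'|x|) dt is finite. -/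
/-!
By AM-GM, `|x|² / (4t) + a t ≥ √a |x|` where `a = Re z`. Spending a fraction `θ` of the exponent
on this bound, with `z' / √a < θ < 1`, leaves the factor `exp (-(θ √a - z') |x|)`, which absorbs
`|x| ^ l` uniformly, times `t ^ k exp (-(1 - θ) (c² / (4t) + a t))`, which no longer depends on `x`
and is integrable on `(0, ∞)`.
-/

open MeasureTheory Real ENNReal Set

lemma rpow_mul_exp_neg_mul_le {r p ε : ℝ} (hr : 0 ≤ r) (hp : 0 ≤ p) (hε : 0 < ε) :
    r ^ p * exp (-(ε * r)) ≤ (p / ε) ^ p := by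
  have h := ProbabilityTheory.rpow_abs_le_mul_exp_abs r hp hε.ne'
  rw [abs_of_nonneg hr, abs_of_pos hε] at h
  calc r ^ p * exp (-(ε * r)) ≤ (p / ε) ^ p * exp (ε * r) * exp (-(ε * r)) := by gcongr
    _ = (p / ε) ^ p := by rw [mul_assoc, ← exp_add, add_neg_cancel, exp_zero, mul_one]

/-- Split `t ^ k` as `t ^ max k 0 * (t⁻¹) ^ max (-k) 0`: the first factor is tamed by half of
`exp (-β t)` at infinity, the second by `exp (-α / t)` at zero, leaving `exp (-β t / 2)`. -/
lemma integrableOn_rpow_mul_exp_neg_div_sub_mul (k : ℝ) {α β : ℝ} (hα : 0 < α) (hβ : 0 < β) :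
    IntegrableOn (fun t => t ^ k * exp (-(α / t) - β * t)) (Ioi 0) := by
  set p := max k 0
  set q := max (-k) 0
  have hp : 0 ≤ p := le_max_right _ _
  have hq : 0 ≤ q := le_max_right _ _
  have hβ2 : 0 < β / 2 := half_pos hβ
  have hbound : ∀ t ∈ Ioi (0 : ℝ), ‖t ^ k * exp (-(α / t) - β * t)‖ ≤
      (p / (β / 2)) ^ p * (q / α) ^ q * exp (-(β / 2) * t) := by
    intro t (ht : 0 < t)
    have hsplit : t ^ k * exp (-(α / t) - β * t) =
        (t ^ p * exp (-(β / 2 * t))) * ((t⁻¹) ^ q * exp (-(α * t⁻¹))) * exp (-(β / 2) * t) := by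
      have hexp : exp (-(α / t) - β * t) =
          exp (-(β / 2 * t)) * exp (-(α * t⁻¹)) * exp (-(β / 2) * t) := by
        rw [← exp_add, ← exp_add]
        ring_nf
      rw [← max_zero_sub_max_neg_zero_eq_self k, rpow_sub ht, inv_rpow ht.le, hexp]
      ring
    have h₁ := rpow_mul_exp_neg_mul_le ht.le hp hβ2
    have h₂ := rpow_mul_exp_neg_mul_le (inv_nonneg.2 ht.le) hq hα
    rw [hsplit, Real.norm_of_nonneg (by positivity)]
    gcongr
  refine ((exp_neg_integrableOn_Ioi 0 hβ2).const_mul ((p / (β / 2)) ^ p * (q / α) ^ q)).mono' ?_ ?_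
  · refine ContinuousOn.aestronglyMeasurable ?_ measurableSet_Ioi
    fun_prop (disch := intro t (ht : 0 < t); first | exact ht.ne' | exact Or.inl ht.ne')
  · exact (ae_restrict_mem measurableSet_Ioi).mono hbound

lemma sqrt_mul_le_sq_div_add_mul {a t : ℝ} (ha : 0 ≤ a) (ht : 0 < t) (r : ℝ) :
    √a * r ≤ r ^ 2 / (4 * t) + a * t := by
  rw [div_add' _ _ _ (by positivity), le_div_iff₀ (by positivity)]
  have hsq : (r - 2 * t * √a) ^ 2 = r ^ 2 + a * t * (4 * t) - √a * r * (4 * t) := by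
    ring_nf
    rw [sq_sqrt ha]
  linarith [sq_nonneg (r - 2 * t * √a)]

lemma neg_sq_div_sub_mul_add_mul_le {a t c r θ z' : ℝ} (ha : 0 ≤ a) (ht : 0 < t) (hc : 0 ≤ c)
    (hcr : c ≤ r) (hθ₀ : 0 ≤ θ) (hθ₁ : θ ≤ 1) :
    -(r ^ 2 / (4 * t)) - a * t + z' * r ≤
      -((1 - θ) * c ^ 2 / 4 / t) - (1 - θ) * a * t - (θ * √a - z') * r := by
  have hamgm := mul_le_mul_of_nonneg_left (sqrt_mul_le_sq_div_add_mul ha ht r) hθ₀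
  have hcr2 : c ^ 2 / (4 * t) ≤ r ^ 2 / (4 * t) := by gcongr
  have hrest := mul_le_mul_of_nonneg_left hcr2 (sub_nonneg.2 hθ₁)
  have hform : (1 - θ) * c ^ 2 / 4 / t = (1 - θ) * (c ^ 2 / (4 * t)) := by ring
  linarith

lemma rpow_mul_rpow_mul_exp_le {a t c r θ z' k l : ℝ} (ha : 0 ≤ a) (ht : 0 < t) (hc : 0 ≤ c)
    (hcr : c ≤ r) (hθ₀ : 0 ≤ θ) (hθ₁ : θ ≤ 1) (hl : 0 ≤ l) (hε : 0 < θ * √a - z') :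
    t ^ k * r ^ l * exp (-(r ^ 2 / (4 * t)) - a * t + z' * r) ≤
      (l / (θ * √a - z')) ^ l * (t ^ k * exp (-((1 - θ) * c ^ 2 / 4 / t) - (1 - θ) * a * t)) := by
  have hr : 0 ≤ r := hc.trans hcr
  calc t ^ k * r ^ l * exp (-(r ^ 2 / (4 * t)) - a * t + z' * r)
      ≤ t ^ k * r ^ l * exp (-((1 - θ) * c ^ 2 / 4 / t) - (1 - θ) * a * t
          - (θ * √a - z') * r) := by
        gcongr
        exact neg_sq_div_sub_mul_add_mul_le ha ht hc hcr hθ₀ hθ₁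
    _ = r ^ l * exp (-((θ * √a - z') * r)) *
          (t ^ k * exp (-((1 - θ) * c ^ 2 / 4 / t) - (1 - θ) * a * t)) := by
        rw [sub_eq_add_neg _ ((θ * √a - z') * r), exp_add]
        ring
    _ ≤ _ := by
        gcongr
        exact rpow_mul_exp_neg_mul_le hr hl hε

theorem stmt12_general (d : ℕ) (z : ℂ)
    (c : ℝ) (hc : 0 < c) (k l z' : ℝ) (hl : 0 ≤ l) (hz'0 : 0 < z')
    (hz' : z' < Real.sqrt z.re) :
    ∃ C : ℝ, ∀ x : EuclideanSpace ℝ (Fin d), c ≤ ‖x‖ →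
      (∫⁻ t in Set.Ioi (0 : ℝ),
          ENNReal.ofReal (t ^ k * ‖x‖ ^ l *
            Real.exp (-(‖x‖ ^ 2 / (4 * t)) - z.re * t + z' * ‖x‖))) ≤
        ENNReal.ofReal C := by
  have hs : 0 < √z.re := hz'0.trans hz'
  have ha : 0 < z.re := sqrt_pos.1 hs
  obtain ⟨θ, hθz', hθ₁⟩ := exists_between ((div_lt_one hs).2 hz')
  have hθ₀ : 0 ≤ θ := (div_nonneg hz'0.le hs.le).trans hθz'.le
  have hε : 0 < θ * √z.re - z' := sub_pos.2 ((div_lt_iff₀ hs).1 hθz')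
  have hg := integrableOn_rpow_mul_exp_neg_div_sub_mul k
    (by have := sub_pos.2 hθ₁; positivity : 0 < (1 - θ) * c ^ 2 / 4) (mul_pos (sub_pos.2 hθ₁) ha)
  refine ⟨(l / (θ * √z.re - z')) ^ l * ∫ t in Ioi 0,
    t ^ k * exp (-((1 - θ) * c ^ 2 / 4 / t) - (1 - θ) * z.re * t), fun x hx => ?_⟩
  rw [← integral_const_mul, ofReal_integral_eq_lintegral_ofReal (hg.const_mul _)
    ((ae_restrict_mem measurableSet_Ioi).mono fun t (ht : 0 < t) => by positivity)]
  exact setLIntegral_mono (by fun_prop) fun t (ht : 0 < t) => ofReal_le_ofReal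
    (rpow_mul_rpow_mul_exp_le ha.le ht hc.le hx hθ₀ hθ₁.le hl hε)

/-- The key uniform bound in the proof of Lemma A.2: for `Re(z) > 0`, `c > 0`, `k ∈ ℝ`,
`l ≥ 0` and `0 < z' < √(Re z)`, the integrals
`∫_0^∞ t^k |x|^l exp(−|x|²/(4t) − Re(z)t + z'|x|) dt` are bounded uniformly in
`x` with `|x| ≥ c`. -/
theorem stmt12 (d : ℕ) (hd : 1 ≤ d) (z : ℂ) (hz : 0 < z.re)
    (c : ℝ) (hc : 0 < c) (k l z' : ℝ) (hl : 0 ≤ l) (hz'0 : 0 < z')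
    (hz' : z' < Real.sqrt z.re) :
    ∃ C : ℝ, ∀ x : EuclideanSpace ℝ (Fin d), c ≤ ‖x‖ →
      (∫⁻ t in Set.Ioi (0 : ℝ),
          ENNReal.ofReal (t ^ k * ‖x‖ ^ l *
            Real.exp (-(‖x‖ ^ 2 / (4 * t)) - z.re * t + z' * ‖x‖))) ≤
        ENNReal.ofReal C :=
  stmt12_general d z c hc k l z' hl hz'0 hz'
end

section
/- For every t > 0 and every a ∈ ℝ², ∫_{ℝ²} |y + a|^{-1} exp(−|y|²/(4t)) dy ≤ √(4π³ t), with equality when a = 0. -/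
/-!
With `ν = exp (-‖y‖² / (4t)) dy`, the layer-cake formula writes the integral as
`∫₀^∞ ν {y | s < ‖y + a‖⁻¹} ds`, and these superlevel sets are balls of radius `s⁻¹` about `-a`
(less their centre). The weight is radially nonincreasing, so moving a ball to the origin can only
increase its weight, whence `a = 0` is extremal. At `a = 0`, polar coordinates give
`2π ∫₀^∞ exp (-s² / (4t)) ds = √(4π³t)`.
-/

open MeasureTheory Real Metric Set ENNReal

lemma setOf_lt_inv_norm_add {E : Type*} [NormedAddCommGroup E] (a : E) {s : ℝ} (hs : 0 < s) :
    {y : E | s < ‖y + a‖⁻¹} = ball (-a) s⁻¹ \ {-a} := by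
  ext y
  rw [mem_ofPred_eq, mem_sdiff, mem_ball, dist_eq_norm, sub_neg_eq_add, mem_singleton_iff,
    ← add_eq_zero_iff_eq_neg, ← ne_eq, ← norm_pos_iff]
  constructor
  · intro h
    have hpos : 0 < ‖y + a‖ := inv_pos.1 (hs.trans h)
    exact ⟨(lt_inv_comm₀ hs hpos).1 h, hpos⟩
  · rintro ⟨h, hpos⟩
    exact (lt_inv_comm₀ hpos hs).1 h

section RadialRearrangement

variable {E : Type*} [NormedAddCommGroup E] [NormedSpace ℝ E] [FiniteDimensional ℝ E]
  [MeasurableSpace E] [BorelSpace E] (μ : Measure E) [μ.IsAddHaarMeasure]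

lemma measure_ball_sdiff_ball_zero (c : E) (r : ℝ) :
    μ (ball c r \ ball 0 r) = μ (ball 0 r \ ball c r) := by
  have hfin : μ (ball c r ∩ ball 0 r) ≠ ∞ :=
    ((measure_mono inter_subset_left).trans_lt measure_ball_lt_top).ne
  refine (ENNReal.add_left_inj hfin).1 ?_
  rw [measure_sdiff_add_inter _ measurableSet_ball, inter_comm,
    measure_sdiff_add_inter _ measurableSet_ball, Measure.addHaar_ball_center]

/-- Off-centre, mass of weight `≤ g r` is traded for mass of weight `≥ g r` on a set of the same
measure. -/
theorem setLIntegral_ball_le_setLIntegral_ball_zero {g : ℝ → ℝ≥0∞} (hg : AntitoneOn g (Ici 0))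
    (c : E) (r : ℝ) : ∫⁻ y in ball c r, g ‖y‖ ∂μ ≤ ∫⁻ y in ball 0 r, g ‖y‖ ∂μ := by
  rcases le_or_gt r 0 with hr | hr
  · simp [ball_eq_empty.2 hr]
  have hout : ∫⁻ y in ball c r \ ball 0 r, g ‖y‖ ∂μ ≤ g r * μ (ball c r \ ball 0 r) := by
    rw [← setLIntegral_const]
    refine setLIntegral_mono' (measurableSet_ball.diff measurableSet_ball) fun y hy => ?_
    have hry : r ≤ ‖y‖ := by simpa using hy.2
    exact hg hr.le (hr.le.trans hry) hry
  have hin : g r * μ (ball 0 r \ ball c r) ≤ ∫⁻ y in ball 0 r \ ball c r, g ‖y‖ ∂μ := by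
    rw [← setLIntegral_const]
    refine setLIntegral_mono' (measurableSet_ball.diff measurableSet_ball) fun y hy => ?_
    have hyr : ‖y‖ < r := by simpa using hy.1
    exact hg (norm_nonneg y) hr.le hyr.le
  calc ∫⁻ y in ball c r, g ‖y‖ ∂μ
      = ∫⁻ y in ball c r ∩ ball 0 r, g ‖y‖ ∂μ + ∫⁻ y in ball c r \ ball 0 r, g ‖y‖ ∂μ :=
        (lintegral_inter_add_sdiff _ _ measurableSet_ball).symm
    _ ≤ ∫⁻ y in ball 0 r ∩ ball c r, g ‖y‖ ∂μ + g r * μ (ball 0 r \ ball c r) := by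
        rw [inter_comm, ← measure_ball_sdiff_ball_zero]
        gcongr
    _ ≤ ∫⁻ y in ball 0 r ∩ ball c r, g ‖y‖ ∂μ + ∫⁻ y in ball 0 r \ ball c r, g ‖y‖ ∂μ := by
        gcongr
    _ = ∫⁻ y in ball 0 r, g ‖y‖ ∂μ := lintegral_inter_add_sdiff _ _ measurableSet_ball

theorem lintegral_inv_norm_add_mul_le [Nontrivial E] {g : ℝ → ℝ≥0∞} (hg : AntitoneOn g (Ici 0))
    (hgm : Measurable g) (a : E) :
    ∫⁻ y, ENNReal.ofReal ‖y + a‖⁻¹ * g ‖y‖ ∂μ ≤ ∫⁻ y, ENNReal.ofReal ‖y‖⁻¹ * g ‖y‖ ∂μ := by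
  have hlayer : ∀ b : E, ∫⁻ y, ENNReal.ofReal ‖y + b‖⁻¹ * g ‖y‖ ∂μ =
      ∫⁻ s in Ioi 0, ∫⁻ y in ball (-b) s⁻¹, g ‖y‖ ∂μ := by
    intro b
    have hν : μ.withDensity (fun y => g ‖y‖) ≪ μ := withDensity_absolutelyContinuous _ _
    calc ∫⁻ y, ENNReal.ofReal ‖y + b‖⁻¹ * g ‖y‖ ∂μ
        = ∫⁻ y, ENNReal.ofReal ‖y + b‖⁻¹ ∂μ.withDensity (fun y => g ‖y‖) := by
          rw [lintegral_withDensity_eq_lintegral_mul _ (by fun_prop) (by fun_prop)]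
          simp only [Pi.mul_apply, mul_comm]
      _ = ∫⁻ s in Ioi 0, ∫⁻ y in ball (-b) s⁻¹, g ‖y‖ ∂μ := by
          rw [lintegral_eq_lintegral_meas_lt _ (ae_of_all _ fun y => by positivity) (by fun_prop)]
          refine setLIntegral_congr_fun measurableSet_Ioi fun s hs => ?_
          rw [setOf_lt_inv_norm_add b hs, measure_sdiff_null (hν (measure_singleton _)),
            withDensity_apply _ measurableSet_ball]
  have hlayer_zero := hlayer 0
  simp only [add_zero, neg_zero] at hlayer_zero
  rw [hlayer, hlayer_zero]
  exact setLIntegral_mono' measurableSet_Ioi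
    fun s _ => setLIntegral_ball_le_setLIntegral_ball_zero μ hg (-a) s⁻¹

theorem integral_inv_norm_add_mul_le [Nontrivial E] {g : ℝ → ℝ} (hg : AntitoneOn g (Ici 0))
    (hg0 : ∀ r, 0 ≤ g r) (hgm : Measurable g) (hint : Integrable (fun y => ‖y‖⁻¹ * g ‖y‖) μ)
    (a : E) : ∫ y, ‖y + a‖⁻¹ * g ‖y‖ ∂μ ≤ ∫ y, ‖y‖⁻¹ * g ‖y‖ ∂μ := by
  have hto_lintegral : ∀ b : E, ∫ y, ‖y + b‖⁻¹ * g ‖y‖ ∂μ =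
      (∫⁻ y, ENNReal.ofReal ‖y + b‖⁻¹ * ENNReal.ofReal (g ‖y‖) ∂μ).toReal := by
    intro b
    rw [integral_eq_lintegral_of_nonneg_ae (ae_of_all _ fun y => mul_nonneg (by positivity)
      (hg0 _)) (by fun_prop)]
    simp_rw [ENNReal.ofReal_mul (inv_nonneg.2 (norm_nonneg _))]
  have hfin := hint.lintegral_lt_top
  simp_rw [ENNReal.ofReal_mul (inv_nonneg.2 (norm_nonneg _))] at hfin
  have hto_lintegral_zero := hto_lintegral 0
  simp only [add_zero] at hto_lintegral_zero
  rw [hto_lintegral, hto_lintegral_zero]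
  exact ENNReal.toReal_mono hfin.ne
    (lintegral_inv_norm_add_mul_le μ (fun r hr s hs hrs => ENNReal.ofReal_le_ofReal (hg hr hs hrs))
      (by fun_prop) a)

end RadialRearrangement

theorem integral_inv_norm_mul_exp_neg_sq_div (t : ℝ) :
    ∫ y : EuclideanSpace ℝ (Fin 2), ‖y‖⁻¹ * exp (-‖y‖ ^ 2 / (4 * t)) = √(4 * π ^ 3 * t) := by
  have hball : volume.real (ball (0 : EuclideanSpace ℝ (Fin 2)) 1) = π := by
    rw [measureReal_def, EuclideanSpace.volume_ball]
    norm_num [sq_sqrt pi_nonneg, pi_nonneg]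
  have hradial : ∫ s in Ioi (0 : ℝ), s ^ (2 - 1) • (s⁻¹ * exp (-s ^ 2 / (4 * t))) =
      ∫ s in Ioi (0 : ℝ), exp (-(4 * t)⁻¹ * s ^ 2) := by
    refine setIntegral_congr_fun measurableSet_Ioi fun s (hs : 0 < s) => ?_
    rw [pow_one, smul_eq_mul, mul_inv_cancel_left₀ hs.ne', neg_div, neg_mul, div_eq_inv_mul]
  rw [integral_fun_norm_addHaar volume fun s => s⁻¹ * exp (-s ^ 2 / (4 * t)),
    finrank_euclideanSpace_fin, hball, hradial, integral_gaussian_Ioi, div_inv_eq_mul,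
    show 4 * π ^ 3 * t = π ^ 2 * (π * (4 * t)) by ring, sqrt_mul (sq_nonneg π), sqrt_sq pi_nonneg]
  simp only [nsmul_eq_mul, smul_eq_mul]
  ring

/-- Estimate (A.8) in the proof of Lemma A.3: for every `t > 0` and `a ∈ ℝ²`,
`∫ |y+a|⁻¹ exp(−|y|²/(4t)) dy ≤ √(4π³t)`, with equality when `a = 0`. -/
theorem stmt14 (t : ℝ) (ht : 0 < t) (a : EuclideanSpace ℝ (Fin 2)) :
    (∫ y : EuclideanSpace ℝ (Fin 2), ‖y + a‖⁻¹ * Real.exp (-‖y‖ ^ 2 / (4 * t))) ≤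
      Real.sqrt (4 * π ^ 3 * t) ∧
    (∫ y : EuclideanSpace ℝ (Fin 2), ‖y‖⁻¹ * Real.exp (-‖y‖ ^ 2 / (4 * t))) =
      Real.sqrt (4 * π ^ 3 * t) := by
  have hcentred := integral_inv_norm_mul_exp_neg_sq_div t
  have hanti : AntitoneOn (fun r : ℝ => exp (-r ^ 2 / (4 * t))) (Ici 0) := fun r hr s _ hrs => by
    dsimp only
    gcongr
  have hint : Integrable (fun y : EuclideanSpace ℝ (Fin 2) => ‖y‖⁻¹ * exp (-‖y‖ ^ 2 / (4 * t))) :=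
    Integrable.of_integral_ne_zero (by rw [hcentred]; positivity)
  refine ⟨?_, hcentred⟩
  rw [← hcentred]
  exact integral_inv_norm_add_mul_le volume hanti (fun _ => (exp_pos _).le) (by fun_prop) hint a
end
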